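/- arXiv:2003.14309 — 9 statements merged into one kernel-verified Lean document; each statement's English description precedes it below -/
import Mathlib

section
/- Let g be a real constant, z_b : ℝ → ℝ differentiable, and h, u, w, σ, p̄, p_b : ℝ → ℝ → ℝ continuously differentiable functions of (x,t). Assume that at every point (x,t) the following four equations hold: (i) ∂_t h + ∂_x(h·u) = 0; (ii) ∂_t(h·u) + ∂_x(h·u² + h·p̄) + g·h·∂_x h + (g·h + p_b)·∂_x z_b = 0; (iii) ∂_t(h·w) + ∂_x(h·u·w) = p_b; (iv) ∂_t(h·σ) + ∂_x(h·u·σ) = −6·p_b + 12·p̄. Then at every point (x,t): ∂_t[(h/2)·(u² + w² + σ²/12)] + ∂_x[u·(h/2)·(u² + w² + σ²/12) + u·g·h²/2 + u·h·p̄] − h·p̄·∂_x u − (g·h²/2)·∂_x u + u·(g·h + p_b)·∂_x z_b − w·p_b + σ·p_b/2 − σ·p̄ = 0. -/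
/-- Partial derivative with respect to the first (space) argument. -/
noncomputable def pdx (f : ℝ → ℝ → ℝ) (x t : ℝ) : ℝ := deriv (fun x' => f x' t) x

/-- Partial derivative with respect to the second (time) argument. -/
noncomputable def pdt (f : ℝ → ℝ → ℝ) (x t : ℝ) : ℝ := deriv (fun t' => f x t') t

section

variable {𝕜 E F G : Type*} [NontriviallyNormedField 𝕜]
  [NormedAddCommGroup E] [NormedSpace 𝕜 E] [NormedAddCommGroup F] [NormedSpace 𝕜 F]
  [NormedAddCommGroup G] [NormedSpace 𝕜 G]

theorem differentiable_fst_of_uncurry {f : E → F → G}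
    (hf : Differentiable 𝕜 (fun p : E × F => f p.1 p.2)) (t : F) :
    Differentiable 𝕜 (fun x => f x t) :=
  hf.comp (differentiable_id.prodMk (differentiable_const t))

theorem differentiable_snd_of_uncurry {f : E → F → G}
    (hf : Differentiable 𝕜 (fun p : E × F => f p.1 p.2)) (x : E) :
    Differentiable 𝕜 (fun t => f x t) :=
  hf.comp ((differentiable_const x).prodMk differentiable_id)

end

theorem stmt_2_general (g : ℝ) (zb : ℝ → ℝ)
    (h u w sg pbar pb : ℝ → ℝ → ℝ)
    (hh : ContDiff ℝ 1 (fun p : ℝ × ℝ => h p.1 p.2))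
    (hu : ContDiff ℝ 1 (fun p : ℝ × ℝ => u p.1 p.2))
    (hw : ContDiff ℝ 1 (fun p : ℝ × ℝ => w p.1 p.2))
    (hsg : ContDiff ℝ 1 (fun p : ℝ × ℝ => sg p.1 p.2))
    (hpbar : ContDiff ℝ 1 (fun p : ℝ × ℝ => pbar p.1 p.2))
    (mass : ∀ x t : ℝ, pdt h x t + pdx (fun x t => h x t * u x t) x t = 0)
    (momx : ∀ x t : ℝ,
      pdt (fun x t => h x t * u x t) x t
        + pdx (fun x t => h x t * (u x t) ^ 2 + h x t * pbar x t) x t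
        + g * h x t * pdx h x t + (g * h x t + pb x t) * deriv zb x = 0)
    (momz : ∀ x t : ℝ,
      pdt (fun x t => h x t * w x t) x t
        + pdx (fun x t => h x t * u x t * w x t) x t = pb x t)
    (sigma : ∀ x t : ℝ,
      pdt (fun x t => h x t * sg x t) x t
        + pdx (fun x t => h x t * u x t * sg x t) x t
      = -6 * pb x t + 12 * pbar x t) :
    ∀ x t : ℝ,
      pdt (fun x t => h x t / 2 * ((u x t) ^ 2 + (w x t) ^ 2 + (sg x t) ^ 2 / 12)) x t
        + pdx (fun x t =>
            u x t * (h x t / 2) * ((u x t) ^ 2 + (w x t) ^ 2 + (sg x t) ^ 2 / 12)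
              + u x t * (g * (h x t) ^ 2 / 2) + u x t * h x t * pbar x t) x t
        - h x t * pbar x t * pdx u x t
        - g * (h x t) ^ 2 / 2 * pdx u x t
        + u x t * (g * h x t + pb x t) * deriv zb x
        - w x t * pb x t + sg x t * pb x t / 2 - sg x t * pbar x t = 0 := by
  intro x t
  have hx {f : ℝ → ℝ → ℝ} (hf : ContDiff ℝ 1 (fun p : ℝ × ℝ => f p.1 p.2)) :
      Differentiable ℝ (fun x => f x t) :=
    differentiable_fst_of_uncurry (hf.differentiable one_ne_zero) t
  have ht {f : ℝ → ℝ → ℝ} (hf : ContDiff ℝ 1 (fun p : ℝ × ℝ => f p.1 p.2)) :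
      Differentiable ℝ (fun t => f x t) :=
    differentiable_snd_of_uncurry (hf.differentiable one_ne_zero) x
  have := hx hh; have := hx hu; have := hx hw; have := hx hsg; have := hx hpbar
  have := ht hh; have := ht hu; have := ht hw; have := ht hsg
  have e_mass := mass x t
  have e_momx := momx x t
  have e_momz := momz x t
  have e_sigma := sigma x t
  simp only [pdx, pdt] at e_mass e_momx e_momz e_sigma ⊢
  simp (disch := fun_prop) only [deriv_fun_mul, deriv_fun_add, deriv_fun_pow, deriv_div_const,
    deriv_const] at e_mass e_momx e_momz e_sigma ⊢
  push_cast
  -- For each velocity component a, a * (∂ₜ(h a) + ∂ₓ(h u a)) - a²/2 * (∂ₜh + ∂ₓ(h u))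
  -- = ∂ₜ(h a²/2) + ∂ₓ(u h a²/2).
  linear_combination u x t * e_momx + w x t * e_momz + sg x t / 12 * e_sigma
    - ((u x t) ^ 2 + (w x t) ^ 2 + (sg x t) ^ 2 / 12) / 2 * e_mass

theorem stmt_2 (g : ℝ) (zb : ℝ → ℝ) (hzb : Differentiable ℝ zb)
    (h u w sg pbar pb : ℝ → ℝ → ℝ)
    (hh : ContDiff ℝ 1 (fun p : ℝ × ℝ => h p.1 p.2))
    (hu : ContDiff ℝ 1 (fun p : ℝ × ℝ => u p.1 p.2))
    (hw : ContDiff ℝ 1 (fun p : ℝ × ℝ => w p.1 p.2))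
    (hsg : ContDiff ℝ 1 (fun p : ℝ × ℝ => sg p.1 p.2))
    (hpbar : ContDiff ℝ 1 (fun p : ℝ × ℝ => pbar p.1 p.2))
    (hpb : ContDiff ℝ 1 (fun p : ℝ × ℝ => pb p.1 p.2))
    (mass : ∀ x t : ℝ, pdt h x t + pdx (fun x t => h x t * u x t) x t = 0)
    (momx : ∀ x t : ℝ,
      pdt (fun x t => h x t * u x t) x t
        + pdx (fun x t => h x t * (u x t) ^ 2 + h x t * pbar x t) x t
        + g * h x t * pdx h x t + (g * h x t + pb x t) * deriv zb x = 0)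
    (momz : ∀ x t : ℝ,
      pdt (fun x t => h x t * w x t) x t
        + pdx (fun x t => h x t * u x t * w x t) x t = pb x t)
    (sigma : ∀ x t : ℝ,
      pdt (fun x t => h x t * sg x t) x t
        + pdx (fun x t => h x t * u x t * sg x t) x t
      = -6 * pb x t + 12 * pbar x t) :
    ∀ x t : ℝ,
      pdt (fun x t => h x t / 2 * ((u x t) ^ 2 + (w x t) ^ 2 + (sg x t) ^ 2 / 12)) x t
        + pdx (fun x t =>
            u x t * (h x t / 2) * ((u x t) ^ 2 + (w x t) ^ 2 + (sg x t) ^ 2 / 12)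
              + u x t * (g * (h x t) ^ 2 / 2) + u x t * h x t * pbar x t) x t
        - h x t * pbar x t * pdx u x t
        - g * (h x t) ^ 2 / 2 * pdx u x t
        + u x t * (g * h x t + pb x t) * deriv zb x
        - w x t * pb x t + sg x t * pb x t / 2 - sg x t * pbar x t = 0 :=
  stmt_2_general g zb h u w sg pbar pb hh hu hw hsg hpbar mass momx momz sigma
end

section
/- Let g be a real constant, z_b : ℝ → ℝ differentiable, and h, u, w, σ, p̄, p_b : ℝ → ℝ → ℝ continuously differentiable functions of (x,t). Assume that at every point (x,t) the original SGN system holds: (i) ∂_t h + ∂_x(h·u) = 0; (ii) ∂_t(h·u) + ∂_x(h·u² + h·p̄) + g·h·∂_x h + (g·h + p_b)·∂_x z_b = 0; (iii) ∂_t(h·w) + ∂_x(h·u·w) = p_b; (iv) ∂_t(h·σ) + ∂_x(h·u·σ) = −6·p_b + 12·p̄; (v) σ = −h·∂_x u; (vi) w + (h/2)·∂_x u − u·∂_x z_b = 0. Define the energy Ẽ := (h/2)·(u² + w² + σ²/12 + g·(h + 2·z_b)). Then at every point (x,t): ∂_t Ẽ + ∂_x[u·(Ẽ + g·h²/2 +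 h·p̄)] = 0. -/
section PartialDerivativeCalculus

variable {f k : ℝ → ℝ → ℝ} {x t : ℝ}

theorem DifferentiableAt.fst_slice
    (hf : DifferentiableAt ℝ (fun p : ℝ × ℝ => f p.1 p.2) (x, t)) :
    DifferentiableAt ℝ (fun x' => f x' t) x :=
  hf.comp (f := fun x' : ℝ => (x', t)) x (differentiableAt_id.prodMk (differentiableAt_const t))

theorem DifferentiableAt.snd_slice
    (hf : DifferentiableAt ℝ (fun p : ℝ × ℝ => f p.1 p.2) (x, t)) :
    DifferentiableAt ℝ (fun t' => f x t') t :=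
  hf.comp (f := fun t' : ℝ => (x, t')) t ((differentiableAt_const x).prodMk differentiableAt_id)

theorem pdx_add (hf : DifferentiableAt ℝ (fun p : ℝ × ℝ => f p.1 p.2) (x, t))
    (hk : DifferentiableAt ℝ (fun p : ℝ × ℝ => k p.1 p.2) (x, t)) :
    pdx (fun x t => f x t + k x t) x t = pdx f x t + pdx k x t :=
  deriv_add hf.fst_slice hk.fst_slice

theorem pdt_add (hf : DifferentiableAt ℝ (fun p : ℝ × ℝ => f p.1 p.2) (x, t))
    (hk : DifferentiableAt ℝ (fun p : ℝ × ℝ => k p.1 p.2) (x, t)) :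
    pdt (fun x t => f x t + k x t) x t = pdt f x t + pdt k x t :=
  deriv_add hf.snd_slice hk.snd_slice

theorem pdx_mul (hf : DifferentiableAt ℝ (fun p : ℝ × ℝ => f p.1 p.2) (x, t))
    (hk : DifferentiableAt ℝ (fun p : ℝ × ℝ => k p.1 p.2) (x, t)) :
    pdx (fun x t => f x t * k x t) x t = pdx f x t * k x t + f x t * pdx k x t :=
  deriv_mul hf.fst_slice hk.fst_slice

theorem pdt_mul (hf : DifferentiableAt ℝ (fun p : ℝ × ℝ => f p.1 p.2) (x, t))
    (hk : DifferentiableAt ℝ (fun p : ℝ × ℝ => k p.1 p.2) (x, t)) :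
    pdt (fun x t => f x t * k x t) x t = pdt f x t * k x t + f x t * pdt k x t :=
  deriv_mul hf.snd_slice hk.snd_slice

theorem pdx_pow (n : ℕ) (hf : DifferentiableAt ℝ (fun p : ℝ × ℝ => f p.1 p.2) (x, t)) :
    pdx (fun x t => f x t ^ n) x t = n * f x t ^ (n - 1) * pdx f x t :=
  deriv_pow hf.fst_slice n

theorem pdt_pow (n : ℕ) (hf : DifferentiableAt ℝ (fun p : ℝ × ℝ => f p.1 p.2) (x, t)) :
    pdt (fun x t => f x t ^ n) x t = n * f x t ^ (n - 1) * pdt f x t :=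
  deriv_pow hf.snd_slice n

theorem pdx_div_const (c : ℝ) : pdx (fun x t => f x t / c) x t = pdx f x t / c :=
  deriv_div_const c

theorem pdt_div_const (c : ℝ) : pdt (fun x t => f x t / c) x t = pdt f x t / c :=
  deriv_div_const c

theorem pdx_const_in_time (φ : ℝ → ℝ) : pdx (fun x _ => φ x) x t = deriv φ x := rfl

theorem pdt_const_in_time (φ : ℝ → ℝ) : pdt (fun x _ => φ x) x t = 0 := deriv_const t (φ x)

end PartialDerivativeCalculus

theorem stmt_3_general (g : ℝ) (zb : ℝ → ℝ) (hzb : Differentiable ℝ zb)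
    (h u w sg pbar pb : ℝ → ℝ → ℝ)
    (hh : ContDiff ℝ 1 (fun p : ℝ × ℝ => h p.1 p.2))
    (hu : ContDiff ℝ 1 (fun p : ℝ × ℝ => u p.1 p.2))
    (hw : ContDiff ℝ 1 (fun p : ℝ × ℝ => w p.1 p.2))
    (hsg : ContDiff ℝ 1 (fun p : ℝ × ℝ => sg p.1 p.2))
    (hpbar : ContDiff ℝ 1 (fun p : ℝ × ℝ => pbar p.1 p.2))
    (mass : ∀ x t : ℝ, pdt h x t + pdx (fun x t => h x t * u x t) x t = 0)
    (momx : ∀ x t : ℝ,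
      pdt (fun x t => h x t * u x t) x t
        + pdx (fun x t => h x t * (u x t) ^ 2 + h x t * pbar x t) x t
        + g * h x t * pdx h x t + (g * h x t + pb x t) * deriv zb x = 0)
    (momz : ∀ x t : ℝ,
      pdt (fun x t => h x t * w x t) x t
        + pdx (fun x t => h x t * u x t * w x t) x t = pb x t)
    (sigmaEvol : ∀ x t : ℝ,
      pdt (fun x t => h x t * sg x t) x t
        + pdx (fun x t => h x t * u x t * sg x t) x t
      = -6 * pb x t + 12 * pbar x t)
    (sigmaDef : ∀ x t : ℝ, sg x t = -(h x t) * pdx u x t)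
    (wDef : ∀ x t : ℝ, w x t + h x t / 2 * pdx u x t - u x t * deriv zb x = 0) :
    ∀ x t : ℝ,
      pdt (fun x t => h x t / 2 *
          ((u x t) ^ 2 + (w x t) ^ 2 + (sg x t) ^ 2 / 12 + g * (h x t + 2 * zb x))) x t
        + pdx (fun x t =>
            u x t * (h x t / 2 *
                ((u x t) ^ 2 + (w x t) ^ 2 + (sg x t) ^ 2 / 12 + g * (h x t + 2 * zb x))
              + g * (h x t) ^ 2 / 2 + h x t * pbar x t)) x t = 0 := by
  have dh := hh.differentiable one_ne_zero
  have du := hu.differentiable one_ne_zero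
  have dw := hw.differentiable one_ne_zero
  have dsg := hsg.differentiable one_ne_zero
  have dpbar := hpbar.differentiable one_ne_zero
  simp (disch := fun_prop) only [pdx_add, pdt_add, pdx_mul, pdt_mul, pdx_pow, pdt_pow,
    pdx_div_const, pdt_div_const, pdx_const_in_time, pdt_const_in_time, deriv_const]
    at mass momx momz sigmaEvol ⊢
  intro x t
  linear_combination u x t * momx x t + w x t * momz x t + (sg x t / 12) * sigmaEvol x t +
    (-(u x t ^ 2 + w x t ^ 2 + sg x t ^ 2 / 12) / 2 + g * h x t + g * zb x) * mass x t +
    (pbar x t - pb x t / 2) * sigmaDef x t + pb x t * wDef x t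

theorem stmt_3 (g : ℝ) (zb : ℝ → ℝ) (hzb : Differentiable ℝ zb)
    (h u w sg pbar pb : ℝ → ℝ → ℝ)
    (hh : ContDiff ℝ 1 (fun p : ℝ × ℝ => h p.1 p.2))
    (hu : ContDiff ℝ 1 (fun p : ℝ × ℝ => u p.1 p.2))
    (hw : ContDiff ℝ 1 (fun p : ℝ × ℝ => w p.1 p.2))
    (hsg : ContDiff ℝ 1 (fun p : ℝ × ℝ => sg p.1 p.2))
    (hpbar : ContDiff ℝ 1 (fun p : ℝ × ℝ => pbar p.1 p.2))
    (hpb : ContDiff ℝ 1 (fun p : ℝ × ℝ => pb p.1 p.2))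
    (mass : ∀ x t : ℝ, pdt h x t + pdx (fun x t => h x t * u x t) x t = 0)
    (momx : ∀ x t : ℝ,
      pdt (fun x t => h x t * u x t) x t
        + pdx (fun x t => h x t * (u x t) ^ 2 + h x t * pbar x t) x t
        + g * h x t * pdx h x t + (g * h x t + pb x t) * deriv zb x = 0)
    (momz : ∀ x t : ℝ,
      pdt (fun x t => h x t * w x t) x t
        + pdx (fun x t => h x t * u x t * w x t) x t = pb x t)
    (sigmaEvol : ∀ x t : ℝ,
      pdt (fun x t => h x t * sg x t) x t
        + pdx (fun x t => h x t * u x t * sg x t) x t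
      = -6 * pb x t + 12 * pbar x t)
    (sigmaDef : ∀ x t : ℝ, sg x t = -(h x t) * pdx u x t)
    (wDef : ∀ x t : ℝ, w x t + h x t / 2 * pdx u x t - u x t * deriv zb x = 0) :
    ∀ x t : ℝ,
      pdt (fun x t => h x t / 2 *
          ((u x t) ^ 2 + (w x t) ^ 2 + (sg x t) ^ 2 / 12 + g * (h x t + 2 * zb x))) x t
        + pdx (fun x t =>
            u x t * (h x t / 2 *
                ((u x t) ^ 2 + (w x t) ^ 2 + (sg x t) ^ 2 / 12 + g * (h x t + 2 * zb x))
              + g * (h x t) ^ 2 / 2 + h x t * pbar x t)) x t = 0 :=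
  stmt_3_general g zb hzb h u w sg pbar pb hh hu hw hsg hpbar mass momx momz sigmaEvol sigmaDef wDef
end

section
/- Let c ≠ 0 be a real constant, and let h, u, σ, p̄ : ℝ → ℝ → ℝ be continuously differentiable functions of (x,t). Assume that at every point (x,t) the mass equation ∂_t h + ∂_x(h·u) = 0 and the averaged-pressure evolution equation ∂_t(h·p̄) + ∂_x[h·u·(p̄ + c²)] − c²·u·∂_x h = −c²·σ hold. Then at every point (x,t): p̄·(−h·∂_x u − σ) = (1/c²)·( ∂_t(h·p̄²/2) + ∂_x(h·u·p̄²/2) ). -/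
section Slices

variable {𝕜 E F G : Type*} [NontriviallyNormedField 𝕜]
  [NormedAddCommGroup E] [NormedSpace 𝕜 E] [NormedAddCommGroup F] [NormedSpace 𝕜 F]
  [NormedAddCommGroup G] [NormedSpace 𝕜 G] {f : E → F → G}

theorem Differentiable.along_fst (hf : Differentiable 𝕜 (fun p : E × F => f p.1 p.2)) (y : F) :
    Differentiable 𝕜 (fun x => f x y) :=
  hf.comp (differentiable_id.prodMk (differentiable_const y))

theorem Differentiable.along_snd (hf : Differentiable 𝕜 (fun p : E × F => f p.1 p.2)) (x : E) :
    Differentiable 𝕜 (fun y => f x y) :=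
  hf.comp ((differentiable_const x).prodMk differentiable_id)

end Slices

section Deriv

variable {𝕜 : Type*} [NontriviallyNormedField 𝕜] {a b : 𝕜 → 𝕜} {x : 𝕜}

theorem deriv_mul_sq_div_two [CharZero 𝕜] (ha : DifferentiableAt 𝕜 a x) (hb : DifferentiableAt 𝕜 b x) :
    deriv (fun y => a y * b y ^ 2 / 2) x
      = b x * deriv (fun y => a y * b y) x - b x ^ 2 / 2 * deriv a x := by
  rw [deriv_div_const, deriv_fun_mul ha (hb.fun_pow 2), deriv_fun_pow hb 2, deriv_fun_mul ha hb]
  ring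

theorem deriv_mul_add_const (ha : DifferentiableAt 𝕜 a x) (hb : DifferentiableAt 𝕜 b x) (k : 𝕜) :
    deriv (fun y => a y * (b y + k)) x = deriv (fun y => a y * b y) x + k * deriv a x := by
  rw [deriv_fun_mul ha (hb.add_const k), deriv_fun_mul ha hb, deriv_add_const]
  ring

end Deriv

theorem pdt_add_pdx_mul_sq_div_two {h u p : ℝ → ℝ → ℝ} {x t : ℝ}
    (hht : DifferentiableAt ℝ (fun t' => h x t') t) (hpt : DifferentiableAt ℝ (fun t' => p x t') t)
    (hhx : DifferentiableAt ℝ (fun x' => h x' t) x) (hux : DifferentiableAt ℝ (fun x' => u x' t) x)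
    (hpx : DifferentiableAt ℝ (fun x' => p x' t) x) :
    pdt (fun x t => h x t * p x t ^ 2 / 2) x t + pdx (fun x t => h x t * u x t * p x t ^ 2 / 2) x t
      = p x t * (pdt (fun x t => h x t * p x t) x t + pdx (fun x t => h x t * u x t * p x t) x t)
        - p x t ^ 2 / 2 * (pdt h x t + pdx (fun x t => h x t * u x t) x t) := by
  have energy_t : pdt (fun x t => h x t * p x t ^ 2 / 2) x t
      = p x t * pdt (fun x t => h x t * p x t) x t - p x t ^ 2 / 2 * pdt h x t :=
    deriv_mul_sq_div_two hht hpt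
  have energy_x : pdx (fun x t => h x t * u x t * p x t ^ 2 / 2) x t
      = p x t * pdx (fun x t => h x t * u x t * p x t) x t
        - p x t ^ 2 / 2 * pdx (fun x t => h x t * u x t) x t :=
    deriv_mul_sq_div_two (hhx.mul hux) hpx
  rw [energy_t, energy_x]
  ring

theorem stmt_4_general (c : ℝ) (hc : c ≠ 0)
    (h u sg pbar : ℝ → ℝ → ℝ)
    (hh : ContDiff ℝ 1 (fun p : ℝ × ℝ => h p.1 p.2))
    (hu : ContDiff ℝ 1 (fun p : ℝ × ℝ => u p.1 p.2))
    (hpbar : ContDiff ℝ 1 (fun p : ℝ × ℝ => pbar p.1 p.2))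
    (mass : ∀ x t : ℝ, pdt h x t + pdx (fun x t => h x t * u x t) x t = 0)
    (pEvol : ∀ x t : ℝ,
      pdt (fun x t => h x t * pbar x t) x t
        + pdx (fun x t => h x t * u x t * (pbar x t + c ^ 2)) x t
        - c ^ 2 * u x t * pdx h x t = -(c ^ 2) * sg x t) :
    ∀ x t : ℝ,
      pbar x t * (-(h x t) * pdx u x t - sg x t)
      = (1 / c ^ 2) *
          (pdt (fun x t => h x t * (pbar x t) ^ 2 / 2) x t
            + pdx (fun x t => h x t * u x t * (pbar x t) ^ 2 / 2) x t) := by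
  intro x t
  have dh := hh.differentiable one_ne_zero
  have dp := hpbar.differentiable one_ne_zero
  have dux := (hu.differentiable one_ne_zero).along_fst t x
  have pdx_hu : pdx (fun x t => h x t * u x t) x t = pdx h x t * u x t + h x t * pdx u x t :=
    deriv_mul (dh.along_fst t x) dux
  have pdx_pressure_flux : pdx (fun x t => h x t * u x t * (pbar x t + c ^ 2)) x t
      = pdx (fun x t => h x t * u x t * pbar x t) x t
        + c ^ 2 * pdx (fun x t => h x t * u x t) x t :=
    deriv_mul_add_const ((dh.along_fst t x).mul dux) (dp.along_fst t x) _
  have pEvol' := pEvol x t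
  rw [pdx_pressure_flux, pdx_hu] at pEvol'
  rw [pdt_add_pdx_mul_sq_div_two (dh.along_snd x t) (dp.along_snd x t) (dh.along_fst t x) dux
    (dp.along_fst t x), mass x t, one_div_mul_eq_div, eq_div_iff (pow_ne_zero 2 hc)]
  linear_combination (-pbar x t) * pEvol'

theorem stmt_4 (c : ℝ) (hc : c ≠ 0)
    (h u sg pbar : ℝ → ℝ → ℝ)
    (hh : ContDiff ℝ 1 (fun p : ℝ × ℝ => h p.1 p.2))
    (hu : ContDiff ℝ 1 (fun p : ℝ × ℝ => u p.1 p.2))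
    (hsg : ContDiff ℝ 1 (fun p : ℝ × ℝ => sg p.1 p.2))
    (hpbar : ContDiff ℝ 1 (fun p : ℝ × ℝ => pbar p.1 p.2))
    (mass : ∀ x t : ℝ, pdt h x t + pdx (fun x t => h x t * u x t) x t = 0)
    (pEvol : ∀ x t : ℝ,
      pdt (fun x t => h x t * pbar x t) x t
        + pdx (fun x t => h x t * u x t * (pbar x t + c ^ 2)) x t
        - c ^ 2 * u x t * pdx h x t = -(c ^ 2) * sg x t) :
    ∀ x t : ℝ,
      pbar x t * (-(h x t) * pdx u x t - sg x t)
      = (1 / c ^ 2) *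
          (pdt (fun x t => h x t * (pbar x t) ^ 2 / 2) x t
            + pdx (fun x t => h x t * u x t * (pbar x t) ^ 2 / 2) x t) :=
  stmt_4_general c hc h u sg pbar hh hu hpbar mass pEvol
end

section
/- Let g be a real constant, c ≠ 0 a real constant, z_b : ℝ → ℝ differentiable, and h, u, w, σ, p̄, p_b : ℝ → ℝ → ℝ continuously differentiable functions of (x,t). Assume that at every point (x,t) the hyperbolic SGN system holds: (i) ∂_t h + ∂_x(h·u) = 0; (ii) ∂_t(h·u) + ∂_x(h·u² + h·p̄) + g·h·∂_x h + (g·h + p_b)·∂_x z_b = 0; (iii) ∂_t(h·w) + ∂_x(h·u·w) = p_b; (iv) ∂_t(h·σ) + ∂_x(h·u·σ) = −6·p_b + 12·p̄; (v) ∂_t(h·p̄) + ∂_x[h·u·(p̄ + c²)] − c²·u·∂_x h = −c²·σ; (vi) ∂_t(h·p_b) + ∂_x(h·u·p_b) − 6·c²·u·∂_x z_b = −6·c²·(w − σ/2). Define the energy E := (h/2)·(u² + w² + g·(h + 2·z_b) + σ²/12 + p̄²/c² + p_b²/(6·c²)). Then at every point (x,t): ∂_t E + ∂_x[u·(E + g·h²/2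 + h·p̄)] = 0. -/
/-!
The energy law is the sum of the six balance laws weighted by the entropy variables: the partial
derivatives of `E = (hu)²/(2h) + (hw)²/(2h) + g h²/2 + g h z_b + (hσ)²/(24h) + (hp̄)²/(2c²h)
+ (hp_b)²/(12c²h)` with respect to the conserved quantities `h, hu, hw, hσ, hp̄, hp_b`, namely
`g (h + z_b) - (u² + w² + σ²/12 + p̄²/c² + p_b²/(6c²))/2, u, w, σ/12, p̄/c², p_b/(6c²)`.
After expanding every derivative by the product rule this is a polynomial identity in the
values and first partial derivatives of the fields at the point.
-/

theorem Differentiable.differentiable_slices {𝕜 E F G : Type*} [NontriviallyNormedField 𝕜]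
    [NormedAddCommGroup E] [NormedSpace 𝕜 E] [NormedAddCommGroup F] [NormedSpace 𝕜 F]
    [NormedAddCommGroup G] [NormedSpace 𝕜 G] {f : E → F → G}
    (hf : Differentiable 𝕜 (fun p : E × F => f p.1 p.2)) (x : E) (y : F) :
    Differentiable 𝕜 (fun x' => f x' y) ∧ Differentiable 𝕜 (fun y' => f x y') :=
  ⟨hf.comp (differentiable_id.prodMk (differentiable_const y)),
    hf.comp ((differentiable_const x).prodMk differentiable_id)⟩

theorem stmt_6 (g c : ℝ) (hc : c ≠ 0) (zb : ℝ → ℝ) (hzb : Differentiable ℝ zb)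
    (h u w sg pbar pb : ℝ → ℝ → ℝ)
    (hh : ContDiff ℝ 1 (fun p : ℝ × ℝ => h p.1 p.2))
    (hu : ContDiff ℝ 1 (fun p : ℝ × ℝ => u p.1 p.2))
    (hw : ContDiff ℝ 1 (fun p : ℝ × ℝ => w p.1 p.2))
    (hsg : ContDiff ℝ 1 (fun p : ℝ × ℝ => sg p.1 p.2))
    (hpbar : ContDiff ℝ 1 (fun p : ℝ × ℝ => pbar p.1 p.2))
    (hpb : ContDiff ℝ 1 (fun p : ℝ × ℝ => pb p.1 p.2))
    (mass : ∀ x t : ℝ, pdt h x t + pdx (fun x t => h x t * u x t) x t = 0)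
    (momx : ∀ x t : ℝ,
      pdt (fun x t => h x t * u x t) x t
        + pdx (fun x t => h x t * (u x t) ^ 2 + h x t * pbar x t) x t
        + g * h x t * pdx h x t + (g * h x t + pb x t) * deriv zb x = 0)
    (momz : ∀ x t : ℝ,
      pdt (fun x t => h x t * w x t) x t
        + pdx (fun x t => h x t * u x t * w x t) x t = pb x t)
    (sigmaEvol : ∀ x t : ℝ,
      pdt (fun x t => h x t * sg x t) x t
        + pdx (fun x t => h x t * u x t * sg x t) x t
      = -6 * pb x t + 12 * pbar x t)
    (pEvol : ∀ x t : ℝ,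
      pdt (fun x t => h x t * pbar x t) x t
        + pdx (fun x t => h x t * u x t * (pbar x t + c ^ 2)) x t
        - c ^ 2 * u x t * pdx h x t = -(c ^ 2) * sg x t)
    (pbEvol : ∀ x t : ℝ,
      pdt (fun x t => h x t * pb x t) x t
        + pdx (fun x t => h x t * u x t * pb x t) x t
        - 6 * c ^ 2 * u x t * deriv zb x
      = -(6 * c ^ 2) * (w x t - sg x t / 2)) :
    ∀ x t : ℝ,
      pdt (fun x t => h x t / 2 *
          ((u x t) ^ 2 + (w x t) ^ 2 + g * (h x t + 2 * zb x)
            + (sg x t) ^ 2 / 12 + (pbar x t) ^ 2 / c ^ 2 + (pb x t) ^ 2 / (6 * c ^ 2))) x t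
        + pdx (fun x t =>
            u x t * (h x t / 2 *
                ((u x t) ^ 2 + (w x t) ^ 2 + g * (h x t + 2 * zb x)
                  + (sg x t) ^ 2 / 12 + (pbar x t) ^ 2 / c ^ 2 + (pb x t) ^ 2 / (6 * c ^ 2))
              + g * (h x t) ^ 2 / 2 + h x t * pbar x t)) x t = 0 := by
  intro x t
  obtain ⟨hhx, hht⟩ := (hh.differentiable one_ne_zero).differentiable_slices x t
  obtain ⟨hux, hut⟩ := (hu.differentiable one_ne_zero).differentiable_slices x t
  obtain ⟨hwx, hwt⟩ := (hw.differentiable one_ne_zero).differentiable_slices x t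
  obtain ⟨hsgx, hsgt⟩ := (hsg.differentiable one_ne_zero).differentiable_slices x t
  obtain ⟨hpbarx, hpbart⟩ := (hpbar.differentiable one_ne_zero).differentiable_slices x t
  obtain ⟨hpbx, hpbt⟩ := (hpb.differentiable one_ne_zero).differentiable_slices x t
  specialize mass x t
  specialize momx x t
  specialize momz x t
  specialize sigmaEvol x t
  specialize pEvol x t
  specialize pbEvol x t
  simp (disch := fun_prop) only [pdx, pdt, deriv_fun_mul, deriv_fun_add, deriv_fun_pow,
    deriv_div_const, deriv_const] at mass momx momz sigmaEvol pEvol pbEvol ⊢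
  linear_combination (norm := skip)
    (g * h x t + g * zb x - (u x t ^ 2 + w x t ^ 2 + sg x t ^ 2 / 12 + pbar x t ^ 2 / c ^ 2
        + pb x t ^ 2 / (6 * c ^ 2)) / 2) * mass
      + u x t * momx + w x t * momz + sg x t / 12 * sigmaEvol + pbar x t / c ^ 2 * pEvol
      + pb x t / (6 * c ^ 2) * pbEvol
  field_simp
  ring
end

section
/- For real parameters h, u, w, σ, p̄, p_b, g, c, let A be the 6×6 real matrix with rows: row 1: (0, 1, 0, 0, 0, 0); row 2: (g·h − u², 2·u, 0, 0, 1, 0); row 3: (−u·w, w, u, 0, 0, 0); row 4: (−u·σ, σ, 0, u, 0, 0); row 5: (−u·(p̄ + c²), p̄ + c², 0, 0, u, 0); row 6: (−u·p_b, p_b, 0, 0, 0, u). Then for every real λ, det(A − λ·I) = (u − λ)⁴ · ((u − λ)² − (g·h + p̄ + c²)). -/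
/-!
The variables `h·w`, `h·σ` and `h·p_b` are passively advected: their columns of `A - λ I`
vanish off the diagonal, so each splits off a factor `u - λ` from the determinant. What remains
is the `3 × 3` block of `(h, h·u, h·p̄)`, whose determinant is
`(u - λ) ((u - λ)² - (g h + p̄ + c²))`.
-/

/-- The quasilinear system matrix `A(U) = ∂F/∂U + B(U)` of the hyperbolic
reformulation of the Serre-Green-Naghdi system, in conserved variables. -/
def sgnMatrix (h u w sg pbar pb g c : ℝ) : Matrix (Fin 6) (Fin 6) ℝ :=
  !![0, 1, 0, 0, 0, 0;
     g * h - u ^ 2, 2 * u, 0, 0, 1, 0;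
     -(u * w), w, u, 0, 0, 0;
     -(u * sg), sg, 0, u, 0, 0;
     -(u * (pbar + c ^ 2)), pbar + c ^ 2, 0, 0, u, 0;
     -(u * pb), pb, 0, 0, 0, u]

namespace Matrix

theorem det_eq_mul_det_submatrix_of_col_eq_zero {R : Type*} [CommRing R] {n : ℕ}
    (A : Matrix (Fin (n + 1)) (Fin (n + 1)) R) (j : Fin (n + 1))
    (hA : ∀ i, i ≠ j → A i j = 0) :
    A.det = A j j * (A.submatrix j.succAbove j.succAbove).det := by
  rw [det_succ_column A j, Finset.sum_eq_single j (fun i _ hi => by simp [hA i hi]) (by simp),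
    ← two_mul, pow_mul, neg_one_sq, one_pow, one_mul]

end Matrix

open Matrix

theorem stmt_8 (h u w sg pbar pb g c : ℝ) :
    ∀ lam : ℝ,
      (sgnMatrix h u w sg pbar pb g c - lam • (1 : Matrix (Fin 6) (Fin 6) ℝ)).det
        = (u - lam) ^ 4 * ((u - lam) ^ 2 - (g * h + pbar + c ^ 2)) := by
  intro lam
  set M := sgnMatrix h u w sg pbar pb g c - lam • (1 : Matrix (Fin 6) (Fin 6) ℝ)
  have h_pb := det_eq_mul_det_submatrix_of_col_eq_zero M 5 (by
    intro i hi; fin_cases i <;> simp_all [M, sgnMatrix])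
  set M₅ := M.submatrix (Fin.succAbove 5) (Fin.succAbove 5)
  have h_sg := det_eq_mul_det_submatrix_of_col_eq_zero M₅ 3 (by
    intro i hi; fin_cases i <;> simp_all [M₅, M, sgnMatrix, Fin.succAbove])
  set M₄ := M₅.submatrix (Fin.succAbove 3) (Fin.succAbove 3)
  have h_w := det_eq_mul_det_submatrix_of_col_eq_zero M₄ 2 (by
    intro i hi; fin_cases i <;> simp_all [M₄, M₅, M, sgnMatrix, Fin.succAbove])
  have h_block : M₄.submatrix (Fin.succAbove 2) (Fin.succAbove 2) =
      !![-lam, 1, 0;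
         g * h - u ^ 2, 2 * u - lam, 1;
         -(u * (pbar + c ^ 2)), pbar + c ^ 2, u - lam] := by
    ext i j
    fin_cases i <;> fin_cases j <;> simp [M₄, M₅, M, sgnMatrix, Fin.succAbove]
  have h_block_det : (!![-lam, 1, 0;
      g * h - u ^ 2, 2 * u - lam, 1;
      -(u * (pbar + c ^ 2)), pbar + c ^ 2, u - lam] : Matrix (Fin 3) (Fin 3) ℝ).det =
      (u - lam) * ((u - lam) ^ 2 - (g * h + pbar + c ^ 2)) := by
    simp only [det_fin_three, of_apply, cons_val', cons_val_zero, cons_val_one, cons_val,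
      cons_val_fin_one]
    ring
  obtain ⟨h₅₅, h₃₃, h₂₂⟩ : M 5 5 = u - lam ∧ M₅ 3 3 = u - lam ∧ M₄ 2 2 = u - lam := by
    simp [M₄, M₅, M, sgnMatrix, Fin.succAbove]
  rw [h_pb, h_sg, h_w, h_block, h_block_det, h₅₅, h₃₃, h₂₂]
  ring
end

section
/- For real parameters h, u, w, σ, p̄, p_b, g, c with D := g·h + p̄ + c² ≥ 0, let A be the 6×6 real matrix with rows: row 1: (0, 1, 0, 0, 0, 0); row 2: (g·h − u², 2·u, 0, 0, 1, 0); row 3: (−u·w, w, u, 0, 0, 0); row 4: (−u·σ, σ, 0, u, 0, 0); row 5: (−u·(p̄ + c²), p̄ + c², 0, 0, u, 0); row 6: (−u·p_b, p_b, 0, 0, 0, u). Then a real number λ is an eigenvalue of A if and only if λ = u, λ = u + √D or λ = u − √D; in particular all eigenvalues of A are real. -/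
open Polynomial

/-- `e ^ 3` times the determinant of the block `!![t, -1, 0; a, b, -1; p₄, q₄, e]` on the indices
`{0, 1, 4}`. -/
theorem det_fin_six_blockTriangular {R : Type*} [CommRing R]
    (t a b e p₂ q₂ p₃ q₃ p₄ q₄ p₅ q₅ : R) :
    !![t, -1, 0, 0, 0, 0;
       a, b, 0, 0, -1, 0;
       p₂, q₂, e, 0, 0, 0;
       p₃, q₃, 0, e, 0, 0;
       p₄, q₄, 0, 0, e, 0;
       p₅, q₅, 0, 0, 0, e].det = e ^ 3 * (t * b * e + t * q₄ + a * e + p₄) := by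
  simp [Matrix.det_succ_row_zero, Fin.sum_univ_succ, Fin.succAbove]
  ring

theorem sgnMatrix_charpoly (h u w sg pbar pb g c : ℝ) :
    (sgnMatrix h u w sg pbar pb g c).charpoly
      = (X - C u) ^ 4 * ((X - C u) ^ 2 - C (g * h + pbar + c ^ 2)) := by
  have hcharmatrix : (sgnMatrix h u w sg pbar pb g c).charmatrix =
      !![X, -1, 0, 0, 0, 0;
         -C (g * h - u ^ 2), X - C (2 * u), 0, 0, -1, 0;
         C (u * w), -C w, X - C u, 0, 0, 0;
         C (u * sg), -C sg, 0, X - C u, 0, 0;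
         C (u * (pbar + c ^ 2)), -C (pbar + c ^ 2), 0, 0, X - C u, 0;
         C (u * pb), -C pb, 0, 0, 0, X - C u] := by
    ext i j
    fin_cases i <;> fin_cases j <;> simp [sgnMatrix]
  rw [Matrix.charpoly, hcharmatrix, det_fin_six_blockTriangular]
  simp only [map_add, map_sub, map_mul, map_pow, map_ofNat]
  ring

theorem isRoot_X_sub_C_pow_four_mul_sq_sub_C_iff {R : Type*} [CommRing R] [IsDomain R]
    {u s d t : R} (hs : s ^ 2 = d) :
    ((X - C u) ^ 4 * ((X - C u) ^ 2 - C d)).IsRoot t ↔ t = u ∨ t = u + s ∨ t = u - s := by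
  have hfactor : (t - u) ^ 2 - d = (t - (u + s)) * (t - (u - s)) := by rw [← hs]; ring
  simp [hfactor, sub_eq_zero]

theorem stmt_9 (h u w sg pbar pb g c : ℝ) (hD : 0 ≤ g * h + pbar + c ^ 2) :
    (∀ lam : ℝ,
      Module.End.HasEigenvalue
          (Matrix.toLin' (sgnMatrix h u w sg pbar pb g c)) lam
        ↔ (lam = u ∨ lam = u + Real.sqrt (g * h + pbar + c ^ 2)
            ∨ lam = u - Real.sqrt (g * h + pbar + c ^ 2)))
    ∧ (∀ μ : ℂ,
        Module.End.HasEigenvalue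
            (Matrix.toLin'
              ((sgnMatrix h u w sg pbar pb g c).map (algebraMap ℝ ℂ))) μ
          → μ.im = 0) := by
  have hsq := Real.sq_sqrt hD
  refine ⟨fun lam => ?_, fun μ hμ => ?_⟩
  · rw [Module.End.hasEigenvalue_iff_isRoot_charpoly, Matrix.charpoly_toLin',
      sgnMatrix_charpoly, isRoot_X_sub_C_pow_four_mul_sq_sub_C_iff hsq]
  · rw [Module.End.hasEigenvalue_iff_isRoot_charpoly, Matrix.charpoly_toLin',
      Matrix.charpoly_map, sgnMatrix_charpoly] at hμ
    simp only [Polynomial.map_mul, Polynomial.map_pow, Polynomial.map_sub, map_X, map_C] at hμ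
    rw [isRoot_X_sub_C_pow_four_mul_sq_sub_C_iff (s := algebraMap ℝ ℂ √(g * h + pbar + c ^ 2))
      (by rw [← map_pow, hsq])] at hμ
    rcases hμ with rfl | rfl | rfl <;> simp
end

section
/- For real parameters h, u, w, σ, p̄, p_b, g, c with D := g·h + p̄ + c² ≥ 0, let A be the 6×6 real matrix with rows: row 1: (0, 1, 0, 0, 0, 0); row 2: (g·h − u², 2·u, 0, 0, 1, 0); row 3: (−u·w, w, u, 0, 0, 0); row 4: (−u·σ, σ, 0, u, 0, 0); row 5: (−u·(p̄ + c²), p̄ + c², 0, 0, u, 0); row 6: (−u·p_b, p_b, 0, 0, 0, u). Then the vectors r₅ = (1, u + √D, w, σ, p̄ + c², p_b) and r₆ = (1, u − √D, w, σ, p̄ + c², p_b) satisfy A·r₅ = (u + √D)·r₅ and A·r₆ = (u − √D)·r₆. -/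
theorem stmt_11 (h u w sg pbar pb g c : ℝ) (hD : 0 ≤ g * h + pbar + c ^ 2) :
    (sgnMatrix h u w sg pbar pb g c).mulVec
          ![1, u + Real.sqrt (g * h + pbar + c ^ 2), w, sg, pbar + c ^ 2, pb]
        = (u + Real.sqrt (g * h + pbar + c ^ 2)) •
            ![1, u + Real.sqrt (g * h + pbar + c ^ 2), w, sg, pbar + c ^ 2, pb]
      ∧ (sgnMatrix h u w sg pbar pb g c).mulVec
          ![1, u - Real.sqrt (g * h + pbar + c ^ 2), w, sg, pbar + c ^ 2, pb]
        = (u - Real.sqrt (g * h + pbar + c ^ 2)) •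
            ![1, u - Real.sqrt (g * h + pbar + c ^ 2), w, sg, pbar + c ^ 2, pb] := by
  have hs : Real.sqrt (g * h + pbar + c ^ 2) ^ 2 = g * h + pbar + c ^ 2 :=
    Real.sq_sqrt hD
  constructor <;>
  · funext i
    fin_cases i <;>
      simp [sgnMatrix, Matrix.mulVec, dotProduct, Fin.sum_univ_six, show (5:Fin 6) = (4:Fin 5).succ from rfl, Matrix.cons_val_succ] <;>
      nlinarith [hs]
end

section
/- For real parameters h, u, w, σ, p̄, p_b, g, c with D := g·h + p̄ + c² > 0, the six vectors r₁ = (0, 0, 0, 1, 0, 0), r₂ = (0, 0, 0, 0, 0, 1), r₃ = (0, 0, 1, 0, 0, 0), r₄ = (1, u, 0, 0, −g·h, 0), r₅ = (1, u + √D, w, σ, p̄ + c², p_b) and r₆ = (1, u − √D, w, σ, p̄ + c², p_b) are linearly independent in ℝ⁶. -/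
theorem stmt_12 (h u w sg pbar pb g c : ℝ) (hD : 0 < g * h + pbar + c ^ 2) :
    LinearIndependent ℝ
      ![(![0, 0, 0, 1, 0, 0] : Fin 6 → ℝ),
        ![0, 0, 0, 0, 0, 1],
        ![0, 0, 1, 0, 0, 0],
        ![1, u, 0, 0, -(g * h), 0],
        ![1, u + Real.sqrt (g * h + pbar + c ^ 2), w, sg, pbar + c ^ 2, pb],
        ![1, u - Real.sqrt (g * h + pbar + c ^ 2), w, sg, pbar + c ^ 2, pb]] := by
  have hspos : 0 < Real.sqrt (g * h + pbar + c ^ 2) := Real.sqrt_pos.mpr hD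
  rw [Fintype.linearIndependent_iff]
  intro f hf
  have v0 : ∀ {α : Type} (a b c' d e f' : α), ![a,b,c',d,e,f'] (0:Fin 6) = a :=
    fun _ _ _ _ _ _ => rfl
  have v1 : ∀ {α : Type} (a b c' d e f' : α), ![a,b,c',d,e,f'] (1:Fin 6) = b :=
    fun _ _ _ _ _ _ => rfl
  have v2 : ∀ {α : Type} (a b c' d e f' : α), ![a,b,c',d,e,f'] (2:Fin 6) = c' :=
    fun _ _ _ _ _ _ => rfl
  have v3 : ∀ {α : Type} (a b c' d e f' : α), ![a,b,c',d,e,f'] (3:Fin 6) = d :=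
    fun _ _ _ _ _ _ => rfl
  have v4 : ∀ {α : Type} (a b c' d e f' : α), ![a,b,c',d,e,f'] (4:Fin 6) = e :=
    fun _ _ _ _ _ _ => rfl
  have v5 : ∀ {α : Type} (a b c' d e f' : α), ![a,b,c',d,e,f'] (5:Fin 6) = f' :=
    fun _ _ _ _ _ _ => rfl
  have e0 := congrFun hf 0
  have e1 := congrFun hf 1
  have e2 := congrFun hf 2
  have e3 := congrFun hf 3
  have e4 := congrFun hf 4
  have e5 := congrFun hf 5
  simp only [Fin.sum_univ_six, Pi.add_apply, Pi.smul_apply, Pi.zero_apply, smul_eq_mul,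
    v0, v1, v2, v3, v4, v5, mul_zero, mul_one, zero_add, add_zero] at e0 e1 e2 e3 e4 e5
  have h45 : f 4 = f 5 := by
    have hz : (f 4 - f 5) * Real.sqrt (g * h + pbar + c ^ 2) = 0 := by linear_combination e1 - u * e0
    rcases mul_eq_zero.mp hz with h' | h'
    · linarith
    · exact absurd h' (ne_of_gt hspos)
  have hsum : f 4 + f 5 = 0 := by
    have hz : (f 4 + f 5) * (g * h + pbar + c ^ 2) = 0 := by linear_combination e4 + (g * h) * e0
    rcases mul_eq_zero.mp hz with h' | h'
    · exact h'
    · exact absurd h' (ne_of_gt hD)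
  have h4 : f 4 = 0 := by linarith
  have h5 : f 5 = 0 := by linarith
  have h3 : f 3 = 0 := by linarith
  have h2 : f 2 = 0 := by linear_combination e2 - w * h4 - w * h5
  have h0 : f 0 = 0 := by linear_combination e3 - sg * h4 - sg * h5
  have h1 : f 1 = 0 := by linear_combination e5 - pb * h4 - pb * h5
  intro i
  fin_cases i
  · exact h0
  · exact h1
  · exact h2
  · exact h3
  · exact h4
  · exact h5
end

section
/- For real parameters h, u, w, σ, p̄, p_b, g, c with g·h + p̄ + c² > 0, let A be the 6×6 real matrix with rows: row 1: (0, 1, 0, 0, 0, 0); row 2: (g·h − u², 2·u, 0, 0, 1, 0); row 3: (−u·w, w, u, 0, 0, 0); row 4: (−u·σ, σ, 0, u, 0, 0); row 5: (−u·(p̄ + c²), p̄ + c², 0, 0, u, 0); row 6: (−u·p_b, p_b, 0, 0, 0, u). Then A is diagonalizable over ℝ: there exists an invertible 6×6 real matrix P and a diagonal 6×6 real matrix Λ such that A = P·Λ·P⁻¹. -/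
section helper
variable {α : Type*}

@[simp] lemma cv6_1 (x : α) (u : Fin 5 → α) : Matrix.vecCons x u 1 = u 0 := rfl
@[simp] lemma cv6_2 (x : α) (u : Fin 5 → α) : Matrix.vecCons x u 2 = u 1 := rfl
@[simp] lemma cv6_3 (x : α) (u : Fin 5 → α) : Matrix.vecCons x u 3 = u 2 := rfl
@[simp] lemma cv6_4 (x : α) (u : Fin 5 → α) : Matrix.vecCons x u 4 = u 3 := rfl
@[simp] lemma cv6_5 (x : α) (u : Fin 5 → α) : Matrix.vecCons x u 5 = u 4 := rfl
@[simp] lemma cv5_1 (x : α) (u : Fin 4 → α) : Matrix.vecCons x u 1 = u 0 := rfl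
@[simp] lemma cv5_2 (x : α) (u : Fin 4 → α) : Matrix.vecCons x u 2 = u 1 := rfl
@[simp] lemma cv5_3 (x : α) (u : Fin 4 → α) : Matrix.vecCons x u 3 = u 2 := rfl
@[simp] lemma cv5_4 (x : α) (u : Fin 4 → α) : Matrix.vecCons x u 4 = u 3 := rfl
@[simp] lemma cv4_1 (x : α) (u : Fin 3 → α) : Matrix.vecCons x u 1 = u 0 := rfl
@[simp] lemma cv4_2 (x : α) (u : Fin 3 → α) : Matrix.vecCons x u 2 = u 1 := rfl
@[simp] lemma cv4_3 (x : α) (u : Fin 3 → α) : Matrix.vecCons x u 3 = u 2 := rfl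
@[simp] lemma cv3_1 (x : α) (u : Fin 2 → α) : Matrix.vecCons x u 1 = u 0 := rfl
@[simp] lemma cv3_2 (x : α) (u : Fin 2 → α) : Matrix.vecCons x u 2 = u 1 := rfl
@[simp] lemma cv2_1 (x : α) (u : Fin 1 → α) : Matrix.vecCons x u 1 = u 0 := rfl

end helper

set_option maxHeartbeats 4000000 in
theorem stmt_13 (h u w sg pbar pb g c : ℝ) (hD : 0 < g * h + pbar + c ^ 2) :
    ∃ (P Λ : Matrix (Fin 6) (Fin 6) ℝ), IsUnit P.det ∧ Λ.IsDiag ∧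
      sgnMatrix h u w sg pbar pb g c = P * Λ * P⁻¹ := by
  have hD' : g * h + pbar + c ^ 2 ≠ 0 := hD.ne'
  set a : ℝ := Real.sqrt (g * h + pbar + c ^ 2) with ha_def
  have ha2 : a ^ 2 = g * h + pbar + c ^ 2 := Real.sq_sqrt hD.le
  have ha : a ≠ 0 := (Real.sqrt_pos.mpr hD).ne'
  set P : Matrix (Fin 6) (Fin 6) ℝ :=
    !![1, 1, 1, 0, 0, 0;
       u + a, u - a, u, 0, 0, 0;
       w, w, 0, 1, 0, 0;
       sg, sg, 0, 0, 1, 0;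
       pbar + c ^ 2, pbar + c ^ 2, -(g * h), 0, 0, 0;
       pb, pb, 0, 0, 0, 1] with hP
  set Q : Matrix (Fin 6) (Fin 6) ℝ :=
    !![g*h/(2*(g*h+pbar+c^2)) - u/(2*a), 1/(2*a), 0, 0, 1/(2*(g*h+pbar+c^2)), 0;
       g*h/(2*(g*h+pbar+c^2)) + u/(2*a), -(1/(2*a)), 0, 0, 1/(2*(g*h+pbar+c^2)), 0;
       (pbar+c^2)/(g*h+pbar+c^2), 0, 0, 0, -(1/(g*h+pbar+c^2)), 0;
       -(w*g*h/(g*h+pbar+c^2)), 0, 1, 0, -(w/(g*h+pbar+c^2)), 0;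
       -(sg*g*h/(g*h+pbar+c^2)), 0, 0, 1, -(sg/(g*h+pbar+c^2)), 0;
       -(pb*g*h/(g*h+pbar+c^2)), 0, 0, 0, -(pb/(g*h+pbar+c^2)), 1] with hQ
  set Λ : Matrix (Fin 6) (Fin 6) ℝ :=
    Matrix.diagonal ![u + a, u - a, u, u, u, u] with hΛ
  have hQP : Q * P = 1 := by
    ext i j
    fin_cases i <;> fin_cases j <;>
      simp [hP, hQ, Matrix.mul_apply, Fin.sum_univ_six, Matrix.one_apply,
        Matrix.vecHead, Matrix.vecTail] <;>
      (field_simp; ring)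
  have hdet : IsUnit P.det := Matrix.isUnit_det_of_left_inverse hQP
  refine ⟨P, Λ, hdet, Matrix.isDiag_diagonal _, ?_⟩
  have key : sgnMatrix h u w sg pbar pb g c * P = P * Λ := by
    ext i j
    fin_cases i <;> fin_cases j <;>
      simp [sgnMatrix, hP, hΛ, Matrix.mul_apply, Fin.sum_univ_six,
        Matrix.diagonal, Matrix.vecHead, Matrix.vecTail] <;>
      nlinarith [ha2]
  calc sgnMatrix h u w sg pbar pb g c
      = sgnMatrix h u w sg pbar pb g c * P * P⁻¹ := by
        rw [Matrix.mul_nonsing_inv_cancel_right _ _ hdet]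
    _ = P * Λ * P⁻¹ := by rw [key]
end
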